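/- arXiv:2406.00884 — 5 statements merged into one kernel-verified Lean document; each statement's English description precedes it below -/
import Mathlib

section
/- Total amortized bound for m increments: let 0 < p ≤ 1 and define the truncated total cost T(vs, 0) = 0, T(vs, m+1) = (1/p)·flips(vs) + T(incr vs, m). Then for all boolean lists vs and all m, T(vs, m) ≤ (2m/p) + (1/p)·B(vs). In particular, starting from the all-zero counter, T(vs₀, m) ≤ 2m/p. -/
/-- Number of set bits of the counter. -/
def B (vs : List Bool) : ℕ := vs.count true

/-- Increment: flip every bit up to and including the first false
    (LSB first). -/
def incr : List Bool → List Bool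
  | [] => []
  | b :: rest => if b then false :: incr rest else true :: rest

/-- The number of bits flipped by `incr`. -/
def flips : List Bool → ℕ
  | [] => 0
  | b :: rest => if b then 1 + flips rest else 1

/-- Truncated total expected cost of m increments. -/
noncomputable def T (p : ℝ) : List Bool → ℕ → ℝ
  | _, 0 => 0
  | vs, m + 1 => (1 / p) * (flips vs : ℝ) + T p (incr vs) m
  termination_by vs m => m

lemma amort (vs : List Bool) : flips vs + B (incr vs) ≤ 2 + B vs := by
  induction vs with
  | nil => simp [flips, incr, B]
  | cons b rest ih =>
    cases b <;> simp [flips, incr, B, List.count_cons] at * <;> omega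

/-- Total amortized bound: T(vs, m) ≤ 2m/p + (1/p)·B(vs); in particular,
    starting from the all-zero counter, T(vs₀, m) ≤ 2m/p. -/
theorem counter_total_bound (p : ℝ) (hp0 : 0 < p) (hp1 : p ≤ 1) :
    (∀ (vs : List Bool) (m : ℕ),
        T p vs m ≤ 2 * (m : ℝ) / p + (1 / p) * (B vs : ℝ)) ∧
    ∀ (n m : ℕ), T p (List.replicate n false) m ≤ 2 * (m : ℝ) / p := by
  have hinv : (0:ℝ) < 1 / p := by positivity
  have main : ∀ (m : ℕ) (vs : List Bool),
      T p vs m ≤ 2 * (m : ℝ) / p + (1 / p) * (B vs : ℝ) := by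
    intro m
    induction m with
    | zero => intro vs; simp [T]; positivity
    | succ m ih =>
      intro vs
      have h1 := ih (incr vs)
      have h2 : (flips vs : ℝ) + (B (incr vs) : ℝ) ≤ 2 + (B vs : ℝ) := by
        exact_mod_cast amort vs
      have : T p vs (m+1) = (1 / p) * (flips vs : ℝ) + T p (incr vs) m := by
        simp [T]
      rw [this]
      have key : (1 / p) * (flips vs : ℝ) + (1 / p) * (B (incr vs) : ℝ)
          ≤ (1 / p) * 2 + (1 / p) * (B vs : ℝ) := by
        rw [← mul_add, ← mul_add]
        exact mul_le_mul_of_nonneg_left h2 hinv.le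
      have heq : 2 * ((m:ℝ) + 1) / p = 2 * (m:ℝ) / p + (1 / p) * 2 := by
        field_simp
      push_cast
      rw [heq]
      linarith [h1, key]
  refine ⟨fun vs m => main m vs, fun n m => ?_⟩
  have := main m (List.replicate n false)
  have hB : B (List.replicate n false) = 0 := by simp [B, List.count_replicate]
  rw [hB] at this
  simpa using this
end

section
/- Good pivot split lemma for quicksort: define cost(n) = 2n·(1 + log_{4/3}(n)) for n ≥ 1 (and cost(0)=0). If n > 0 and (1/4)·n ≤ k ≤ (3/4)·n with k a natural number, then cost(k) + cost(n−k) ≤ cost(n) − 3n. -/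
/-- Expected-comparison cost bound for quicksort:
    cost(n) = 2n·(1 + log(n)/log(4/3)) for n ≥ 1, cost(0) = 0. -/
noncomputable def cost (n : ℕ) : ℝ :=
  if n = 0 then 0 else 2 * n * (1 + Real.log n / Real.log (4 / 3))

lemma log_num1 : 3 * Real.log (4/3) ≤ Real.log (8/3) := by
  rw [show (3:ℝ) * Real.log (4/3) = Real.log ((4/3)^(3:ℕ)) by rw [Real.log_pow]; push_cast; ring]
  exact Real.log_le_log (by norm_num) (by norm_num)

lemma log_num2 : 12 * Real.log (4/3) ≤ 3 * Real.log 2 + 4 * Real.log (8/5) := by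
  rw [show (12:ℝ) * Real.log (4/3) = Real.log ((4/3)^(12:ℕ)) by rw [Real.log_pow]; push_cast; ring,
      show (3:ℝ) * Real.log 2 = Real.log ((2:ℝ)^(3:ℕ)) by rw [Real.log_pow]; push_cast; ring,
      show (4:ℝ) * Real.log (8/5) = Real.log ((8/5)^(4:ℕ)) by rw [Real.log_pow]; push_cast; ring,
      ← Real.log_mul (by norm_num) (by norm_num)]
  exact Real.log_le_log (by norm_num) (by norm_num)

lemma key_half (a b nr : ℝ) (hab : a + b = nr) (hn : 0 < nr)
    (h1 : nr/4 ≤ a) (hle : a ≤ b) :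
    a * Real.log a + b * Real.log b + (3/2) * Real.log (4/3) * nr ≤ nr * Real.log nr := by
  have hL : 0 < Real.log (4/3) := Real.log_pos (by norm_num)
  have ha : 0 < a := by linarith
  have hb : 0 < b := by linarith
  have ha2 : a ≤ nr/2 := by linarith
  rcases le_or_gt a (3*nr/8) with hc | hc
  · -- a ≤ 3nr/8, b ≤ 3nr/4
    have hla : Real.log a ≤ Real.log nr - Real.log (8/3) := by
      have h := Real.log_le_log ha (show a ≤ 3/8 * nr by linarith)
      rw [Real.log_mul (by norm_num) (ne_of_gt hn),
          show (3/8:ℝ) = (8/3)⁻¹ by norm_num, Real.log_inv] at h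
      linarith
    have hlb : Real.log b ≤ Real.log nr - Real.log (4/3) := by
      have h := Real.log_le_log hb (show b ≤ 3/4 * nr by linarith)
      rw [Real.log_mul (by norm_num) (ne_of_gt hn),
          show (3/4:ℝ) = (4/3)⁻¹ by norm_num, Real.log_inv] at h
      linarith
    have H1 : a * Real.log a ≤ a * (Real.log nr - Real.log (8/3)) :=
      mul_le_mul_of_nonneg_left hla ha.le
    have H2 : b * Real.log b ≤ b * (Real.log nr - Real.log (4/3)) :=
      mul_le_mul_of_nonneg_left hlb hb.le
    have H3 : a * (3 * Real.log (4/3)) ≤ a * Real.log (8/3) :=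
      mul_le_mul_of_nonneg_left log_num1 ha.le
    have Hsum : a * Real.log nr + b * Real.log nr = nr * Real.log nr := by
      rw [← add_mul, hab]
    have Hpos : 0 ≤ Real.log (4/3) * (2*a - nr/2) :=
      mul_nonneg hL.le (by linarith)
    nlinarith [H1, H2, H3, Hsum, Hpos]
  · -- a ≥ 3nr/8, a ≤ nr/2, b ≤ 5nr/8, b ≥ nr/2
    have hla : Real.log a ≤ Real.log nr - Real.log 2 := by
      have h := Real.log_le_log ha (show a ≤ 1/2 * nr by linarith)
      rw [Real.log_mul (by norm_num) (ne_of_gt hn),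
          show (1/2:ℝ) = (2:ℝ)⁻¹ by norm_num, Real.log_inv] at h
      linarith
    have hlb : Real.log b ≤ Real.log nr - Real.log (8/5) := by
      have h := Real.log_le_log hb (show b ≤ 5/8 * nr by linarith)
      rw [Real.log_mul (by norm_num) (ne_of_gt hn),
          show (5/8:ℝ) = (8/5)⁻¹ by norm_num, Real.log_inv] at h
      linarith
    have H1 : a * Real.log a ≤ a * (Real.log nr - Real.log 2) :=
      mul_le_mul_of_nonneg_left hla ha.le
    have H2 : b * Real.log b ≤ b * (Real.log nr - Real.log (8/5)) :=
      mul_le_mul_of_nonneg_left hlb hb.le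
    have hl2 : 0 < Real.log 2 := Real.log_pos (by norm_num)
    have hl85 : 0 < Real.log (8/5) := Real.log_pos (by norm_num)
    have Hsum : a * Real.log nr + b * Real.log nr = nr * Real.log nr := by
      rw [← add_mul, hab]
    have Ha : 3*nr/8 * Real.log 2 ≤ a * Real.log 2 :=
      mul_le_mul_of_nonneg_right (by linarith) hl2.le
    have Hb : nr/2 * Real.log (8/5) ≤ b * Real.log (8/5) :=
      mul_le_mul_of_nonneg_right (by linarith) hl85.le
    have Hn : nr/8 * (12 * Real.log (4/3)) ≤ nr/8 * (3 * Real.log 2 + 4 * Real.log (8/5)) :=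
      mul_le_mul_of_nonneg_left log_num2 (by linarith)
    nlinarith [H1, H2, Hsum, Ha, Hb, Hn]

lemma key (a b nr : ℝ) (hab : a + b = nr) (hn : 0 < nr)
    (h1 : nr/4 ≤ a) (h2 : nr/4 ≤ b) :
    a * Real.log a + b * Real.log b + (3/2) * Real.log (4/3) * nr ≤ nr * Real.log nr := by
  rcases le_total a b with h | h
  · exact key_half a b nr hab hn h1 h
  · have := key_half b a nr (by linarith) hn h2 h
    linarith

/-- Good pivot split lemma: if n/4 ≤ k ≤ 3n/4 then
    cost(k) + cost(n−k) ≤ cost(n) − 3n. -/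
theorem good_pivot_split (n k : ℕ) (hn : 0 < n)
    (hk1 : (1 / 4 : ℝ) * n ≤ k) (hk2 : (k : ℝ) ≤ (3 / 4 : ℝ) * n) :
    cost k + cost (n - k) ≤ cost n - 3 * n := by
  have hnR : (0:ℝ) < n := by exact_mod_cast hn
  have hk0 : k ≠ 0 := by
    rintro rfl
    simp at hk1
    nlinarith
  have hklt : k < n := by
    by_contra h
    push_neg at h
    have : (n:ℝ) ≤ k := by exact_mod_cast h
    nlinarith
  have hnk0 : n - k ≠ 0 := by omega
  have hn0 : n ≠ 0 := hn.ne'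
  have hcast : ((n - k : ℕ) : ℝ) = (n:ℝ) - k := by
    push_cast [Nat.cast_sub hklt.le]; ring
  set a : ℝ := (k:ℝ) with ha
  set b : ℝ := (n:ℝ) - k with hb
  have hL : 0 < Real.log (4/3) := Real.log_pos (by norm_num)
  have K := key a b n (by ring) hnR (by linarith) (by simp only [hb]; linarith)
  simp only [cost, hk0, hnk0, hn0, if_false, hcast]
  have e1 : 2 * a * (1 + Real.log a / Real.log (4/3))
      = 2*a + 2/Real.log (4/3) * (a * Real.log a) := by
    field_simp
  have e2 : 2 * b * (1 + Real.log b / Real.log (4/3))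
      = 2*b + 2/Real.log (4/3) * (b * Real.log b) := by
    field_simp
  have e3 : 2 * (n:ℝ) * (1 + Real.log n / Real.log (4/3))
      = 2*(n:ℝ) + 2/Real.log (4/3) * ((n:ℝ) * Real.log n) := by
    field_simp
  rw [e1, e2, e3]
  have hmul : 2/Real.log (4/3) * (a * Real.log a + b * Real.log b)
      ≤ 2/Real.log (4/3) * ((n:ℝ) * Real.log n - (3/2) * Real.log (4/3) * n) :=
    mul_le_mul_of_nonneg_left (by linarith) (by positivity)
  have expand : 2/Real.log (4/3) * ((n:ℝ) * Real.log n - (3/2) * Real.log (4/3) * n)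
      = 2/Real.log (4/3) * ((n:ℝ) * Real.log n) - 3 * n := by
    field_simp
  rw [expand] at hmul
  have hab : a + b = (n:ℝ) := by simp [ha, hb]
  nlinarith
end

section
/- Bad pivot split lemma for quicksort: with cost(n) = 2n·(1 + log_{4/3}(n)) for n ≥ 1 and cost(0) = 0, for all natural numbers k, n with 0 < k ≤ n, cost(k) + cost(n−k) ≤ cost(n). -/
/-- Bad pivot split lemma: for 0 < k ≤ n, cost(k) + cost(n−k) ≤ cost(n). -/
theorem bad_pivot_split (n k : ℕ) (hk0 : 0 < k) (hkn : k ≤ n) :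
    cost k + cost (n - k) ≤ cost n := by
  rcases eq_or_lt_of_le hkn with rfl | hlt
  · simp [cost]
  · have hm : 0 < n - k := Nat.sub_pos_of_lt hlt
    have hn : 0 < n := lt_trans hk0 hlt
    have hL : 0 < Real.log (4 / 3) := Real.log_pos (by norm_num)
    have hcast : (k : ℝ) + ((n - k : ℕ) : ℝ) = (n : ℝ) := by
      rw [Nat.cast_sub hkn]; ring
    have hka : (k : ℝ) * Real.log k ≤ (k : ℝ) * Real.log n := by
      apply mul_le_mul_of_nonneg_left _ (by positivity)
      exact Real.log_le_log (by exact_mod_cast hk0) (by exact_mod_cast hkn)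
    have hma : ((n - k : ℕ) : ℝ) * Real.log (n - k : ℕ) ≤ ((n - k : ℕ) : ℝ) * Real.log n := by
      apply mul_le_mul_of_nonneg_left _ (by positivity)
      exact Real.log_le_log (by exact_mod_cast hm) (by exact_mod_cast Nat.sub_le n k)
    have key : (k : ℝ) * Real.log k + ((n - k : ℕ) : ℝ) * Real.log (n - k : ℕ)
        ≤ (n : ℝ) * Real.log n := by
      have h3 : (k : ℝ) * Real.log n + ((n - k : ℕ) : ℝ) * Real.log n = (n : ℝ) * Real.log n := by
        rw [← add_mul, hcast]
      linarith
    have h2 : ((k : ℝ) * Real.log k + ((n - k : ℕ) : ℝ) * Real.log (n - k : ℕ)) / Real.log (4 / 3)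
        ≤ ((n : ℝ) * Real.log n) / Real.log (4 / 3) := (div_le_div_iff_of_pos_right hL).mpr key
    simp only [cost, if_neg hk0.ne', if_neg hm.ne', if_neg hn.ne']
    have e1 : ∀ x y : ℝ, 2 * x * (1 + y / Real.log (4 / 3)) = 2 * x + 2 * ((x * y) / Real.log (4 / 3)) := by
      intro x y; field_simp
    rw [e1, e1, e1]
    have : ((k : ℝ) * Real.log k) / Real.log (4 / 3)
        + (((n - k : ℕ) : ℝ) * Real.log (n - k : ℕ)) / Real.log (4 / 3)
        ≤ ((n : ℝ) * Real.log n) / Real.log (4 / 3) := by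
      rw [← add_div]; exact h2
    linarith
end

section
/- Quicksort averaging inequality: with cost as above, for all natural numbers n ≥ 2, (1/n)·∑_{k=1}^{n} (n + cost(k) + cost(n−k)) ≤ cost(n). -/
lemma log43_le : Real.log (4/3) ≤ 8/25 := by
  have h3 : (3:ℝ) * Real.log (4/3) = Real.log (64/27) := by
    rw [show (64:ℝ)/27 = (4/3)^(3:ℕ) by norm_num, Real.log_pow]
    push_cast; ring
  have h2 : Real.log (64/27) ≤ 24/25 := by
    rw [Real.log_le_iff_le_exp (by norm_num)]
    have he : Real.exp (24/25) = Real.exp 1 * Real.exp (-(1/25)) := by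
      rw [← Real.exp_add]; norm_num
    have h1 := Real.add_one_le_exp (-(1/25):ℝ)
    have h0 := Real.exp_one_gt_d9
    nlinarith [Real.exp_pos (-(1/25):ℝ)]
  linarith

lemma cost_eq (m : ℕ) : cost m = 2*m + (2 / Real.log (4/3)) * ((m:ℝ) * Real.log m) := by
  unfold cost
  rcases eq_or_ne m 0 with h | h
  · simp [h]
  · rw [if_neg h]; ring

lemma log_lb (n t : ℝ) (ht : 1 ≤ t) (htn : t ≤ n) :
    Real.log t ≤ Real.log n - (n - t)/n := by
  have hn0 : (0:ℝ) < n := by linarith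
  have ht0 : (0:ℝ) < t := by linarith
  have h := Real.log_le_sub_one_of_pos (show (0:ℝ) < t/n by positivity)
  rw [Real.log_div (ne_of_gt ht0) (ne_of_gt hn0)] at h
  have : (n - t)/n = 1 - t/n := by field_simp
  linarith

lemma good_bound (n k : ℕ) (hk1 : 1 ≤ k) (h1 : n ≤ 5*k) (h2 : 5*k ≤ 4*n) (hn : 2 ≤ n) :
    (k:ℝ) * Real.log k + ((n:ℝ) - k) * Real.log ((n:ℝ) - k)
      ≤ (n:ℝ) * Real.log n - 8*(n:ℝ)/25 := by
  have hkn : k + 1 ≤ n := by omega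
  have hx1 : (1:ℝ) ≤ (k:ℝ) := by exact_mod_cast hk1
  have hxn : (k:ℝ) + 1 ≤ (n:ℝ) := by exact_mod_cast hkn
  have hn0 : (0:ℝ) < n := by positivity
  have h1' : (n:ℝ) ≤ 5*(k:ℝ) := by exact_mod_cast h1
  have h2' : 5*(k:ℝ) ≤ 4*(n:ℝ) := by exact_mod_cast h2
  have b1 := log_lb n k hx1 (by linarith)
  have b2 := log_lb n ((n:ℝ) - k) (by linarith) (by linarith)
  have m1 : (k:ℝ) * Real.log k ≤ (k:ℝ) * (Real.log n - ((n:ℝ) - k)/n) :=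
    mul_le_mul_of_nonneg_left b1 (by linarith)
  have m2 : ((n:ℝ) - k) * Real.log ((n:ℝ) - k)
      ≤ ((n:ℝ) - k) * (Real.log n - ((n:ℝ) - ((n:ℝ) - k))/n) :=
    mul_le_mul_of_nonneg_left b2 (by linarith)
  have key : (k:ℝ) * (Real.log n - ((n:ℝ) - k)/n) + ((n:ℝ) - k) * (Real.log n - ((n:ℝ) - ((n:ℝ) - k))/n)
      = (n:ℝ) * Real.log n - 2*(k:ℝ)*((n:ℝ) - k)/n := by
    field_simp; ring
  have h3 : 8*(n:ℝ)/25 ≤ 2*(k:ℝ)*((n:ℝ) - k)/n := by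
    rw [div_le_div_iff₀ (by norm_num) hn0]
    nlinarith
  linarith

lemma triv_bound (n k : ℕ) (hk : k ≤ n) (hn : 1 ≤ n) :
    (k:ℝ) * Real.log k ≤ (k:ℝ) * Real.log n := by
  rcases Nat.eq_zero_or_pos k with h | h
  · simp [h]
  · apply mul_le_mul_of_nonneg_left _ (by positivity)
    apply Real.log_le_log (by exact_mod_cast h) (by exact_mod_cast hk)

lemma count_good (n : ℕ) (hn : 2 ≤ n) :
    n ≤ 2 * ((Finset.Icc 1 n).filter (fun k => n ≤ 5*k ∧ 5*k ≤ 4*n)).card := by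
  have hsub : Finset.Icc ((n+4)/5) (4*n/5) ⊆
      (Finset.Icc 1 n).filter (fun k => n ≤ 5*k ∧ 5*k ≤ 4*n) := by
    intro k hk
    simp only [Finset.mem_Icc, Finset.mem_filter] at *
    omega
  have h := Finset.card_le_card hsub
  rw [Nat.card_Icc] at h
  omega

/-- Quicksort averaging inequality:
    (1/n)·∑_{k=1}^{n} (n + cost(k) + cost(n−k)) ≤ cost(n) for n ≥ 2. -/
theorem quicksort_averaging (n : ℕ) (hn : 2 ≤ n) :
    (1 / (n : ℝ)) * ∑ k ∈ Finset.Icc 1 n, ((n : ℝ) + cost k + cost (n - k)) ≤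
      cost n := by
  have hn0 : (0:ℝ) < n := by positivity
  have hL : 0 < Real.log (4/3) := Real.log_pos (by norm_num)
  have hL8 : Real.log (4/3) ≤ 8/25 := log43_le
  set L := Real.log (4/3) with hLdef
  rw [one_div_mul_eq_div, div_le_iff₀ hn0]
  have hbound : ∀ k ∈ Finset.Icc 1 n, (n:ℝ) + cost k + cost (n-k) ≤
      3*(n:ℝ) + (2/L) * ((n:ℝ) * Real.log n
        - (8*(n:ℝ)/25) * (if n ≤ 5*k ∧ 5*k ≤ 4*n then (1:ℝ) else 0)) := by
    intro k hk
    rw [Finset.mem_Icc] at hk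
    obtain ⟨hk1, hk2⟩ := hk
    have hcast : ((n - k : ℕ) : ℝ) = (n:ℝ) - k := by
      rw [Nat.cast_sub hk2]
    rw [cost_eq, cost_eq, hcast]
    have h2L : (0:ℝ) ≤ 2 / L := by positivity
    by_cases hgood : n ≤ 5*k ∧ 5*k ≤ 4*n
    · rw [if_pos hgood]
      have hg := good_bound n k hk1 hgood.1 hgood.2 hn
      have hmul := mul_le_mul_of_nonneg_left hg h2L
      linarith [hmul]
    · rw [if_neg hgood]
      have t1 := triv_bound n k hk2 (by omega)
      have t2 := triv_bound n (n-k) (by omega) (by omega)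
      rw [hcast] at t2
      have hmul := mul_le_mul_of_nonneg_left (add_le_add t1 t2) h2L
      have : (2/L) * ((k:ℝ) * Real.log n + ((n:ℝ) - k) * Real.log n)
          = (2/L) * ((n:ℝ) * Real.log n) := by ring
      linarith [hmul]
  have hS := Finset.sum_le_sum hbound
  set m := ((Finset.Icc 1 n).filter (fun k => n ≤ 5*k ∧ 5*k ≤ 4*n)).card with hmdef
  have hm : (n:ℝ) ≤ 2 * m := by exact_mod_cast count_good n hn
  have hsum : ∑ k ∈ Finset.Icc 1 n, (3*(n:ℝ) + (2/L) * ((n:ℝ) * Real.log n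
        - (8*(n:ℝ)/25) * (if n ≤ 5*k ∧ 5*k ≤ 4*n then (1:ℝ) else 0)))
      = (n:ℝ)*(3*(n:ℝ)) + (2/L) * ((n:ℝ)*((n:ℝ) * Real.log n) - (8*(n:ℝ)/25) * m) := by
    rw [Finset.sum_add_distrib, Finset.sum_const, Nat.card_Icc, ← Finset.mul_sum,
      Finset.sum_sub_distrib, Finset.sum_const, Nat.card_Icc, ← Finset.mul_sum,
      Finset.sum_boole, ← hmdef]
    push_cast
    ring
  rw [hsum] at hS
  have hinv : (25:ℝ)/8 ≤ 1/L := by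
    rw [le_div_iff₀ hL]; linarith
  have hcost : cost n * (n:ℝ) = 2*(n:ℝ)*(n:ℝ) + (2/L) * ((n:ℝ)*((n:ℝ) * Real.log n)) := by
    rw [cost_eq]; ring
  rw [hcost]
  have hm0 : (0:ℝ) ≤ m := by positivity
  have key : (n:ℝ)*(n:ℝ) ≤ (2/L) * ((8*(n:ℝ)/25) * m) := by
    have e1 : (2/L) * ((8*(n:ℝ)/25) * m) = (1/L) * ((16*(n:ℝ)/25) * m) := by ring
    rw [e1]
    have e2 : (25/8:ℝ) * ((16*(n:ℝ)/25) * m) = 2*(n:ℝ)*m := by ring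
    have h4 : (0:ℝ) ≤ (16*(n:ℝ)/25) * m := by positivity
    nlinarith [mul_le_mul_of_nonneg_right hinv h4]
  linarith [hS]
end

section
/- Let cost(n) = 2n·(1 + log_{4/3}(n)). Then any function Q : ℕ → ℝ with Q(0) = Q(1) = 0 and Q(n) ≤ (1/n)·∑_{k=1}^{n}(n + Q(min k (n−1)) + Q(n−k)) for all n ≥ 2 satisfies Q(n) ≤ cost(n) for all n. -/
lemma L_pos : (0:ℝ) < Real.log (4/3) := Real.log_pos (by norm_num)

lemma log2_ge : 2 * Real.log (4/3 : ℝ) ≤ Real.log 2 := by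
  have h : Real.log ((4/3 : ℝ) * (4/3)) = Real.log (4/3 : ℝ) + Real.log (4/3 : ℝ) :=
    Real.log_mul (by norm_num) (by norm_num)
  have h2 : Real.log ((4/3 : ℝ) * (4/3)) ≤ Real.log 2 :=
    Real.log_le_log (by norm_num) (by norm_num)
  linarith

@[simp] lemma cost_zero : cost 0 = 0 := by simp [cost]

lemma cost_nonneg (n : ℕ) : 0 ≤ cost n := by
  unfold cost
  split
  · exact le_rfl
  · next h =>
    have h1 : (1:ℝ) ≤ (n:ℝ) := by exact_mod_cast Nat.one_le_iff_ne_zero.mpr h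
    have hl := Real.log_nonneg h1
    have hL := L_pos
    have : (0:ℝ) ≤ Real.log n / Real.log (4/3) := div_nonneg hl hL.le
    nlinarith

lemma cost_mono {m n : ℕ} (h : m ≤ n) : cost m ≤ cost n := by
  rcases Nat.eq_zero_or_pos m with hm | hm
  · simpa [hm] using cost_nonneg n
  · have hn : n ≠ 0 := by omega
    have hm' : m ≠ 0 := by omega
    unfold cost
    rw [if_neg hm', if_neg hn]
    have h1 : (1:ℝ) ≤ (m:ℝ) := by exact_mod_cast hm
    have hmn : (m:ℝ) ≤ (n:ℝ) := by exact_mod_cast h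
    have hlog : Real.log m ≤ Real.log n := Real.log_le_log (by linarith) hmn
    have hl := Real.log_nonneg h1
    have hL := L_pos
    simp only [div_eq_mul_inv]
    have hinv : (0:ℝ) ≤ (Real.log (4/3:ℝ))⁻¹ := inv_nonneg.mpr hL.le
    have e1 : Real.log m * (Real.log (4/3:ℝ))⁻¹ ≤ Real.log n * (Real.log (4/3:ℝ))⁻¹ :=
      mul_le_mul_of_nonneg_right hlog hinv
    have e2 : (0:ℝ) ≤ Real.log m * (Real.log (4/3:ℝ))⁻¹ := mul_nonneg hl hinv
    nlinarith [mul_nonneg (sub_nonneg.mpr hmn) (by linarith : (0:ℝ) ≤ 1 + Real.log m * (Real.log (4/3:ℝ))⁻¹),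
      mul_nonneg (by linarith : (0:ℝ) ≤ (n:ℝ)) (sub_nonneg.mpr e1)]

lemma cost_superadd (a b : ℕ) : cost a + cost b ≤ cost (a + b) := by
  rcases Nat.eq_zero_or_pos a with ha | ha
  · simp [ha, cost_nonneg]
  rcases Nat.eq_zero_or_pos b with hb | hb
  · simp [hb, cost_nonneg]
  have hab : a + b ≠ 0 := by omega
  unfold cost
  rw [if_neg (by omega : a ≠ 0), if_neg (by omega : b ≠ 0), if_neg hab]
  have hL := L_pos
  have ha1 : (1:ℝ) ≤ (a:ℝ) := by exact_mod_cast ha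
  have hb1 : (1:ℝ) ≤ (b:ℝ) := by exact_mod_cast hb
  have hcab : ((a + b : ℕ):ℝ) = (a:ℝ) + b := by push_cast; ring
  rw [hcab]
  have hla : Real.log a ≤ Real.log ((a:ℝ) + b) := Real.log_le_log (by linarith) (by linarith)
  have hlb : Real.log b ≤ Real.log ((a:ℝ) + b) := Real.log_le_log (by linarith) (by linarith)
  have key : (a:ℝ) * Real.log a + (b:ℝ) * Real.log b
      ≤ ((a:ℝ) + b) * Real.log ((a:ℝ) + b) := by
    nlinarith
  have hinv : (0:ℝ) ≤ (Real.log (4/3:ℝ))⁻¹ := inv_nonneg.mpr hL.le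
  have h2 := mul_le_mul_of_nonneg_right key hinv
  simp only [div_eq_mul_inv]
  linarith [h2]

lemma card_good_aux {n : ℕ} (h : 2 ≤ n) : 2 * n ≤ 5 * (3 * n / 4 + 1 - (n + 3) / 4) := by
  obtain ⟨q, r, hr4, rfl⟩ : ∃ q r, r < 4 ∧ n = 4 * q + r :=
    ⟨n / 4, n % 4, Nat.mod_lt _ (by norm_num), by omega⟩
  interval_cases r <;> omega

/-- bad-pivot bound -/
lemma cost_bad {k n : ℕ} (hk : k ≤ n) : cost k + cost (n - k) ≤ cost n := by
  have := cost_superadd k (n - k)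
  rwa [Nat.add_sub_cancel' hk] at this

/-- good-pivot real inequality -/
lemma real_good (a b : ℝ) (ha1 : 1 ≤ a) (hb1 : 1 ≤ b) (hq : (a + b) / 4 ≤ a) (hh : a ≤ b) :
    2 * a * (1 + Real.log a / Real.log (4/3)) + 2 * b * (1 + Real.log b / Real.log (4/3))
      ≤ 2 * (a + b) * (1 + Real.log (a + b) / Real.log (4/3)) - 5/2 * (a + b) := by
  have hL := L_pos
  set L := Real.log (4/3 : ℝ) with hLdef
  have hn : (0:ℝ) < a + b := by linarith
  have hla : Real.log a ≤ Real.log (a + b) - Real.log 2 := by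
    have h1 : Real.log a ≤ Real.log ((a + b)/2) := Real.log_le_log (by linarith) (by linarith)
    rwa [Real.log_div hn.ne' two_ne_zero] at h1
  have hlb : Real.log b ≤ Real.log (a + b) - L := by
    have h1 : Real.log b ≤ Real.log ((a + b) * (3/4)) :=
      Real.log_le_log (by linarith) (by linarith)
    rw [Real.log_mul hn.ne' (by norm_num), show Real.log ((3:ℝ)/4) = -L by
      rw [hLdef, ← Real.log_inv]; norm_num] at h1
    linarith
  have hl2 : 2 * L ≤ Real.log 2 := log2_ge
  have key : a * Real.log a + b * Real.log b
      ≤ (a + b) * Real.log (a + b) - 5/4 * (a + b) * L := by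
    nlinarith [mul_le_mul_of_nonneg_left hla (by linarith : (0:ℝ) ≤ a),
      mul_le_mul_of_nonneg_left hlb (by linarith : (0:ℝ) ≤ b),
      mul_nonneg (by linarith : (0:ℝ) ≤ a) (by linarith : (0:ℝ) ≤ Real.log 2 - 2*L),
      mul_nonneg hL.le (by linarith : (0:ℝ) ≤ 3*a - b)]
  have hinv : (0:ℝ) < L⁻¹ := inv_pos.mpr hL
  have h2 := mul_le_mul_of_nonneg_right key hinv.le
  have hLL : L * L⁻¹ = 1 := mul_inv_cancel₀ hL.ne'
  have expand : ∀ x : ℝ, Real.log x / L = Real.log x * L⁻¹ := fun x => div_eq_mul_inv _ _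
  rw [expand, expand, expand]
  nlinarith [h2, hLL]

/-- good-pivot bound for naturals -/
lemma cost_good {n k : ℕ} (hn : 2 ≤ n) (hq : (n:ℝ) / 4 ≤ (k:ℝ)) (hu : (k:ℝ) ≤ 3 * n / 4) :
    cost k + cost (n - k) ≤ cost n - 5/2 * n := by
  have hn0 : (0:ℝ) < n := by positivity
  have hk1 : 1 ≤ k := by
    by_contra h
    push_neg at h
    interval_cases k
    · simp at hq; linarith
  have hkn : k < n := by
    by_contra h
    push_neg at h
    have : (n:ℝ) ≤ (k:ℝ) := by exact_mod_cast h
    linarith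
  have hnk1 : 1 ≤ n - k := by omega
  have hcast : ((n - k : ℕ) : ℝ) = (n:ℝ) - k := by
    push_cast [Nat.cast_sub hkn.le]; ring
  have hk1' : (1:ℝ) ≤ (k:ℝ) := by exact_mod_cast hk1
  have hnk1' : (1:ℝ) ≤ (n:ℝ) - k := by
    rw [← hcast]; exact_mod_cast hnk1
  have hne : k ≠ 0 := by omega
  have hne2 : n - k ≠ 0 := by omega
  have hne3 : n ≠ 0 := by omega
  unfold cost
  rw [if_neg hne, if_neg hne2, if_neg hne3, hcast]
  rcases le_total (k:ℝ) ((n:ℝ) - k) with hle | hle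
  · have := real_good (k:ℝ) ((n:ℝ) - k) hk1' hnk1' (by linarith) hle
    have heq : (k:ℝ) + ((n:ℝ) - k) = (n:ℝ) := by ring
    rw [heq] at this
    linarith
  · have := real_good ((n:ℝ) - k) (k:ℝ) hnk1' hk1' (by linarith) hle
    have heq : ((n:ℝ) - k) + (k:ℝ) = (n:ℝ) := by ring
    rw [heq] at this
    linarith

/-- Expected quicksort recursion bound: any Q : ℕ → ℝ with Q(0) = Q(1) = 0 and
    Q(n) ≤ (1/n)·∑_{k=1}^{n} (n + Q(min k (n-1)) + Q(n−k)) for n ≥ 2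
    satisfies Q(n) ≤ cost(n). -/
theorem quicksort_recursion_bound (Q : ℕ → ℝ) (h0 : Q 0 = 0) (h1 : Q 1 = 0)
    (hrec : ∀ n, 2 ≤ n →
      Q n ≤ (1 / (n : ℝ)) *
        ∑ k ∈ Finset.Icc 1 n, ((n : ℝ) + Q (min k (n - 1)) + Q (n - k))) :
    ∀ n, Q n ≤ cost n := by
  intro n
  induction n using Nat.strong_induction_on with
  | _ n ih =>
    match n, ih with
    | 0, _ => simp [h0]
    | 1, _ => rw [h1]; exact cost_nonneg 1
    | (m+2), ih =>
      set n := m + 2 with hndef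
      have hn2 : 2 ≤ n := by omega
      have hn0 : (0:ℝ) < (n:ℝ) := by positivity
      -- the set of good pivots
      set G : Finset ℕ := Finset.Icc ((n+3)/4) (3*n/4) with hGdef
      have hGsub : G ⊆ Finset.Icc 1 n := by
        intro x hx
        rw [hGdef, Finset.mem_Icc] at hx
        rw [Finset.mem_Icc]
        omega
      have hcard : 2 * n ≤ 5 * G.card := by
        rw [hGdef, Nat.card_Icc]
        exact card_good_aux hn2
      -- pointwise bound on summands
      have hpt : ∀ k ∈ Finset.Icc 1 n,
          (n : ℝ) + Q (min k (n - 1)) + Q (n - k)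
            ≤ (n:ℝ) + cost n - (if k ∈ G then 5/2 * (n:ℝ) else 0) := by
        intro k hk
        rw [Finset.mem_Icc] at hk
        have hq1 : Q (min k (n-1)) ≤ cost (min k (n-1)) := ih _ (by omega)
        have hq2 : Q (n - k) ≤ cost (n - k) := ih _ (by omega)
        have hmono : cost (min k (n-1)) ≤ cost k := cost_mono (min_le_left _ _)
        by_cases hG : k ∈ G
        · rw [if_pos hG]
          rw [hGdef, Finset.mem_Icc] at hG
          have hlo : (n:ℝ) / 4 ≤ (k:ℝ) := by
            have : n ≤ 4 * k := by omega
            have : (n:ℝ) ≤ 4 * k := by exact_mod_cast this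
            linarith
          have hhi : (k:ℝ) ≤ 3 * n / 4 := by
            have : 4 * k ≤ 3 * n := by omega
            have : (4:ℝ) * k ≤ 3 * n := by exact_mod_cast this
            linarith
          have := cost_good hn2 hlo hhi
          linarith
        · rw [if_neg hG]
          have := cost_bad (n := n) (k := k) hk.2
          linarith
      have hsum := Finset.sum_le_sum hpt
      -- compute the RHS sum
      have hsummed : ∑ k ∈ Finset.Icc 1 n,
          ((n:ℝ) + cost n - (if k ∈ G then 5/2 * (n:ℝ) else 0))
          = (n:ℝ) * ((n:ℝ) + cost n) - (G.card : ℝ) * (5/2 * (n:ℝ)) := by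
        rw [Finset.sum_sub_distrib, Finset.sum_const, Finset.sum_ite_mem,
          Finset.inter_eq_right.mpr hGsub, Finset.sum_const, Nat.card_Icc]
        simp [Nat.card_Icc, nsmul_eq_mul]
        ring
      have hQ := hrec n hn2
      have hbound : Q n ≤ (1/(n:ℝ)) * ((n:ℝ) * ((n:ℝ) + cost n) - (G.card:ℝ) * (5/2 * n)) := by
        calc Q n ≤ (1/(n:ℝ)) * ∑ k ∈ Finset.Icc 1 n,
              ((n:ℝ) + Q (min k (n-1)) + Q (n-k)) := hQ
          _ ≤ _ := by
              apply mul_le_mul_of_nonneg_left _ (by positivity)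
              rw [← hsummed]; exact hsum
      have hfinal : (1/(n:ℝ)) * ((n:ℝ) * ((n:ℝ) + cost n) - (G.card:ℝ) * (5/2 * n))
          = (n:ℝ) + cost n - (5/2) * G.card := by
        field_simp
      rw [hfinal] at hbound
      have hc : 2 * (n:ℝ) ≤ 5 * (G.card:ℝ) := by exact_mod_cast hcard
      linarith
end
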